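/- Let α_i ∈ (0,1) with α_i ↑ 1, y_i ∈ Y, and γ_i ∈ W_{α_i}(y_i) be probability measures on G converging in the weak* topology to a probability measure γ on G. Then γ ∈ W. In particular, the upper topological limit as α ↑ 1 of ∪_{y0∈Y} W_α(y0) is contained in W. -/

import Mathlib

/-!
The graph `G` is closed (`U` is upper semicontinuous with closed values and `f` is continuous),
so by the portmanteau theorem the weak limit `γ` is still concentrated on `G`. Given `φ`
continuous on `Y`, extend it by Tietze to a bounded continuous `ψ` on `ℝ^m`. The defining identity
of `W_α(y)` gives `∫ (ψ ∘ f - ψ) dγ_i = (1 - α_i) / α_i * ∫ (ψ - ψ(y_i)) dγ_i = O(1 - α_i)`,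
while weak convergence carries the left side to `∫ (ψ ∘ f - ψ) dγ`, which on `G` is the
integral for `φ`.
-/

open MeasureTheory Filter Topology Set ENNReal

noncomputable section

namespace LPOC

/-- The state space `ℝ^m`. -/
abbrev E (m : ℕ) := EuclideanSpace ℝ (Fin m)

variable {m : ℕ} {U0 : Type*} [MetricSpace U0]

/-- Upper semicontinuity of a compact-valued set-valued map at points of `Y`. -/
def UscOn (Y : Set (E m)) (A : E m → Set U0) : Prop :=
  ∀ y ∈ Y, ∀ V : Set U0, IsOpen V → A y ⊆ V →
    ∃ O : Set (E m), IsOpen O ∧ y ∈ O ∧ ∀ y' ∈ O ∩ Y, A y' ⊆ V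

/-- `A(y) := {u ∈ U(y) : f(y,u) ∈ Y}`. -/
def Amap (Y : Set (E m)) (U : E m → Set U0) (f : E m × U0 → E m) (y : E m) : Set U0 :=
  {u ∈ U y | f (y, u) ∈ Y}

/-- `G := {(y,u) : y ∈ Y, u ∈ U(y), f(y,u) ∈ Y}`, the graph of `A`. -/
def graphG (Y : Set (E m)) (U : E m → Set U0) (f : E m × U0 → E m) : Set (E m × U0) :=
  {p | p.1 ∈ Y ∧ p.2 ∈ U p.1 ∧ f p ∈ Y}

/-- An admissible process `(y(·),u(·))` from `y0` on the infinite horizon. -/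
def AdmProc (Y : Set (E m)) (U : E m → Set U0) (f : E m × U0 → E m)
    (y0 : E m) (y : ℕ → E m) (u : ℕ → U0) : Prop :=
  y 0 = y0 ∧ ∀ t : ℕ, y (t + 1) = f (y t, u t) ∧ y t ∈ Y ∧ u t ∈ U (y t)

/-- An admissible process from `y0` on the finite horizon `{0, ..., S-1}`. -/
def AdmProcH (Y : Set (E m)) (U : E m → Set U0) (f : E m × U0 → E m)
    (S : ℕ) (y0 : E m) (y : ℕ → E m) (u : ℕ → U0) : Prop :=
  y 0 = y0 ∧ (∀ t < S, y (t + 1) = f (y t, u t) ∧ y t ∈ Y ∧ u t ∈ U (y t)) ∧ y S ∈ Y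

/-- The discounted cost `Σ_{t=0}^∞ α^t g(y(t),u(t))`. -/
def discountedCost (g : E m × U0 → ℝ) (α : ℝ) (y : ℕ → E m) (u : ℕ → U0) : ℝ :=
  ∑' t : ℕ, α ^ t * g (y t, u t)

/-- The discounted value function `V_α` (real-valued version). -/
def Valpha (Y : Set (E m)) (U : E m → Set U0) (f : E m × U0 → E m) (g : E m × U0 → ℝ)
    (α : ℝ) (y0 : E m) : ℝ :=
  sInf {r : ℝ | ∃ y u, AdmProc Y U f y0 y u ∧ r = discountedCost g α y u}

/-- The discounted value function `V_α` with values in `ℝ ∪ {±∞}` (equal to `+∞` when no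
admissible process exists). -/
def ValphaE (Y : Set (E m)) (U : E m → Set U0) (f : E m × U0 → E m) (g : E m × U0 → ℝ)
    (α : ℝ) (y0 : E m) : EReal :=
  sInf {r : EReal | ∃ y u, AdmProc Y U f y0 y u ∧ r = ((discountedCost g α y u : ℝ) : EReal)}

/-- The finite-horizon value function `V(S, y0)`. -/
def Vfin (Y : Set (E m)) (U : E m → Set U0) (f : E m × U0 → E m) (g : E m × U0 → ℝ)
    (S : ℕ) (y0 : E m) : ℝ :=
  sInf {r : ℝ | ∃ y u, AdmProcH Y U f S y0 y u ∧ r = ∑ t ∈ Finset.range S, g (y t, u t)}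

variable [MeasurableSpace U0] [BorelSpace U0]

/-- The discounted occupational measure `γ^α` generated by a process, i.e. the measure with
`γ^α(Q) = (1-α) Σ_{t=0}^∞ α^t 1_Q(y(t),u(t))`. -/
def discOcc (α : ℝ) (y : ℕ → E m) (u : ℕ → U0) : Measure (E m × U0) :=
  Measure.sum fun t : ℕ => (ENNReal.ofReal ((1 - α) * α ^ t)) • Measure.dirac (y t, u t)

/-- The occupational measure over `{0,...,S-1}` generated by a process, i.e. the measure with
`γ_S(Q) = (1/S) Σ_{t=0}^{S-1} 1_Q(y(t),u(t))`. -/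
def occS (S : ℕ) (y : ℕ → E m) (u : ℕ → U0) : Measure (E m × U0) :=
  ((S : ℝ≥0∞))⁻¹ • ∑ t ∈ Finset.range S, Measure.dirac (y t, u t)

/-- `Γ_α(y0)`: the set of discounted occupational measures of admissible processes from `y0`. -/
def GammaA (Y : Set (E m)) (U : E m → Set U0) (f : E m × U0 → E m) (α : ℝ) (y0 : E m) :
    Set (ProbabilityMeasure (E m × U0)) :=
  {γ | ∃ y u, AdmProc Y U f y0 y u ∧ (γ : Measure (E m × U0)) = discOcc α y u}

/-- `Γ_α := ∪_{y0 ∈ Y} Γ_α(y0)`. -/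
def GammaAall (Y : Set (E m)) (U : E m → Set U0) (f : E m × U0 → E m) (α : ℝ) :
    Set (ProbabilityMeasure (E m × U0)) :=
  ⋃ y0 ∈ Y, GammaA Y U f α y0

/-- `Γ(S)`: the set of occupational measures over `{0,...,S-1}` of admissible processes on
horizon `S`, over all initial conditions in `Y`. -/
def GammaSset (Y : Set (E m)) (U : E m → Set U0) (f : E m × U0 → E m) (S : ℕ) :
    Set (ProbabilityMeasure (E m × U0)) :=
  {γ | ∃ y0 ∈ Y, ∃ y u, AdmProcH Y U f S y0 y u ∧ (γ : Measure (E m × U0)) = occS S y u}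

/-- `W_α(y0)`: probability measures `γ` concentrated on `G` such that
`∫_G [α(φ(f(y,u))-φ(y)) + (1-α)(φ(y0)-φ(y))] dγ = 0` for all continuous `φ : Y → ℝ`. -/
def Wa (Y : Set (E m)) (U : E m → Set U0) (f : E m × U0 → E m) (α : ℝ) (y0 : E m) :
    Set (ProbabilityMeasure (E m × U0)) :=
  {γ | (γ : Measure (E m × U0)) (graphG Y U f)ᶜ = 0 ∧
    ∀ φ : E m → ℝ, ContinuousOn φ Y →
      ∫ p, (α * (φ (f p) - φ p.1) + (1 - α) * (φ y0 - φ p.1))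
        ∂(γ : Measure (E m × U0)) = 0}

/-- `W`: probability measures `γ` concentrated on `G` such that
`∫_G (φ(f(y,u))-φ(y)) dγ = 0` for all continuous `φ : Y → ℝ`. -/
def Wset (Y : Set (E m)) (U : E m → Set U0) (f : E m × U0 → E m) :
    Set (ProbabilityMeasure (E m × U0)) :=
  {γ | (γ : Measure (E m × U0)) (graphG Y U f)ᶜ = 0 ∧
    ∀ φ : E m → ℝ, ContinuousOn φ Y →
      ∫ p, (φ (f p) - φ p.1) ∂(γ : Measure (E m × U0)) = 0}

/-- `g*_α(y0)`: the optimal value of the IDLP problem over `W_α(y0)`. -/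
def gStarA (Y : Set (E m)) (U : E m → Set U0) (f : E m × U0 → E m) (g : E m × U0 → ℝ)
    (α : ℝ) (y0 : E m) : ℝ :=
  sInf {r : ℝ | ∃ γ ∈ Wa Y U f α y0, r = ∫ p, g p ∂(γ : Measure (E m × U0))}

/-- `g*`: the optimal value of the IDLP problem over `W`. -/
def gStar (Y : Set (E m)) (U : E m → Set U0) (f : E m × U0 → E m) (g : E m × U0 → ℝ) : ℝ :=
  sInf {r : ℝ | ∃ γ ∈ Wset Y U f, r = ∫ p, g p ∂(γ : Measure (E m × U0))}

/-- Membership in the class `LS` of bounded lower semicontinuous functions `Y → ℝ`. -/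
def BddLscOn (Y : Set (E m)) (ψ : E m → ℝ) : Prop :=
  LowerSemicontinuousOn ψ Y ∧ ∃ C : ℝ, ∀ y ∈ Y, |ψ y| ≤ C

/-- The inner infimum in the max-min problem (discounted case):
`inf_{(y,u) ∈ G} { g(y,u) + α(ψ(f(y,u))-ψ(y)) + (1-α)(ψ(y0)-ψ(y)) }`. -/
def muA (Y : Set (E m)) (U : E m → Set U0) (f : E m × U0 → E m) (g : E m × U0 → ℝ)
    (α : ℝ) (y0 : E m) (ψ : E m → ℝ) : ℝ :=
  sInf {s : ℝ | ∃ p ∈ graphG Y U f,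
    s = g p + α * (ψ (f p) - ψ p.1) + (1 - α) * (ψ y0 - ψ p.1)}

/-- `μ*_α(y0) := sup_{ψ ∈ LS} inf_{(y,u) ∈ G} {...}`. -/
def muStarA (Y : Set (E m)) (U : E m → Set U0) (f : E m × U0 → E m) (g : E m × U0 → ℝ)
    (α : ℝ) (y0 : E m) : ℝ :=
  sSup {r : ℝ | ∃ ψ : E m → ℝ, BddLscOn Y ψ ∧ r = muA Y U f g α y0 ψ}

/-- The inner infimum in the max-min problem (average case):
`inf_{(y,u) ∈ G} { g(y,u) + ψ(f(y,u)) - ψ(y) }`. -/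
def muBar (Y : Set (E m)) (U : E m → Set U0) (f : E m × U0 → E m) (g : E m × U0 → ℝ)
    (ψ : E m → ℝ) : ℝ :=
  sInf {s : ℝ | ∃ p ∈ graphG Y U f, s = g p + ψ (f p) - ψ p.1}

/-- `μ* := sup_{ψ ∈ LS} inf_{(y,u) ∈ G} { g(y,u) + ψ(f(y,u)) - ψ(y) }`. -/
def muStar (Y : Set (E m)) (U : E m → Set U0) (f : E m × U0 → E m) (g : E m × U0 → ℝ) : ℝ :=
  sSup {r : ℝ | ∃ ψ : E m → ℝ, BddLscOn Y ψ ∧ r = muBar Y U f g ψ}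

/-- The convex hull of a set of probability measures: all finite convex combinations. -/
def convCombos {X : Type*} [MeasurableSpace X] (Γ : Set (ProbabilityMeasure X)) :
    Set (ProbabilityMeasure X) :=
  {γ | ∃ (n : ℕ) (w : Fin n → ℝ) (μs : Fin n → ProbabilityMeasure X),
    (∀ i, 0 ≤ w i) ∧ (∑ i, w i) = 1 ∧ (∀ i, μs i ∈ Γ) ∧
    (γ : Measure X) = ∑ i, ENNReal.ofReal (w i) • (μs i : Measure X)}

end LPOC

open scoped BoundedContinuousFunction

theorem MeasureTheory.ProbabilityMeasure.measure_eq_zero_of_tendsto_of_isOpen {Ω ι : Type*}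
    [MeasurableSpace Ω] [TopologicalSpace Ω] [OpensMeasurableSpace Ω] [HasOuterApproxClosed Ω]
    {L : Filter ι} [L.NeBot] {μ : ProbabilityMeasure Ω} {μs : ι → ProbabilityMeasure Ω}
    (hμs : Tendsto μs L (𝓝 μ)) {O : Set Ω} (hO : IsOpen O) (h0 : ∀ i, (μs i : Measure Ω) O = 0) :
    (μ : Measure Ω) O = 0 := by
  have := ProbabilityMeasure.le_liminf_measure_open_of_tendsto hμs hO
  simpa only [h0, liminf_const, nonpos_iff_eq_zero] using this

theorem ContinuousOn.exists_boundedContinuous_eqOn {X : Type*} [TopologicalSpace X]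
    [NormalSpace X] [T2Space X] {Y : Set X} (hY : IsCompact Y) {φ : X → ℝ}
    (hφ : ContinuousOn φ Y) : ∃ ψ : X →ᵇ ℝ, EqOn ψ φ Y := by
  have : CompactSpace Y := isCompact_iff_compactSpace.mp hY
  obtain ⟨ψ, -, hψ⟩ := BoundedContinuousFunction.exists_norm_eq_domRestrict_eq_of_closed
    (BoundedContinuousFunction.mkOfCompact ⟨Y.domRestrict φ, hφ.domRestrict⟩) hY.isClosed
  exact ⟨ψ, fun y hy => congrArg (· ⟨y, hy⟩) hψ⟩

namespace LPOC

variable {m : ℕ} {U0 : Type*} [MetricSpace U0]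

theorem UscOn.isClosed_graph {Y : Set (E m)} {U : E m → Set U0} (hU : UscOn Y U)
    (hY : IsClosed Y) (hUc : ∀ y ∈ Y, IsClosed (U y)) :
    IsClosed {p : E m × U0 | p.1 ∈ Y ∧ p.2 ∈ U p.1} := by
  rw [← isOpen_compl_iff, isOpen_iff_mem_nhds]
  rintro ⟨y, u⟩ hp
  by_cases hy : y ∈ Y
  · have hu : u ∉ closure (U y) := by rw [(hUc y hy).closure_eq]; exact fun hu => hp ⟨hy, hu⟩
    obtain ⟨V, hV, T, hT, hVT⟩ := Filter.disjoint_iff.mp (disjoint_nhdsSet_nhds.mpr hu)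
    obtain ⟨V', hV'o, hUV', hV'V⟩ := mem_nhdsSet_iff_exists.mp hV
    obtain ⟨O, hO, hyO, hOV⟩ := hU y hy V' hV'o hUV'
    filter_upwards [prod_mem_nhds (hO.mem_nhds hyO) hT] with q hq hqG
    exact hVT.ne_of_mem (hV'V (hOV q.1 ⟨hq.1, hqG.1⟩ hqG.2)) hq.2 rfl
  · filter_upwards [(hY.isOpen_compl.preimage continuous_fst).mem_nhds hy] with q hq hqG
    exact hq hqG.1

theorem isClosed_graphG {Y : Set (E m)} {U : E m → Set U0} {f : E m × U0 → E m}
    (hY : IsClosed Y) (hU : UscOn Y U) (hUc : ∀ y ∈ Y, IsClosed (U y)) (hf : Continuous f) :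
    IsClosed (graphG Y U f) := by
  have hG : graphG Y U f = {p | p.1 ∈ Y ∧ p.2 ∈ U p.1} ∩ f ⁻¹' Y := by
    ext; simp only [graphG, mem_ofPred_eq, mem_inter_iff, mem_preimage, and_assoc]
  rw [hG]
  exact (hU.isClosed_graph hY hUc).inter (hY.preimage hf)

variable [MeasurableSpace U0] [BorelSpace U0]

theorem integral_drift_eq_of_mem_Wa {Y : Set (E m)} {U : E m → Set U0} {f : E m × U0 → E m}
    {α : ℝ} {y0 : E m} {γ : ProbabilityMeasure (E m × U0)} (hf : Continuous f)
    (hγ : γ ∈ Wa Y U f α y0) (ψ : E m →ᵇ ℝ) :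
    α * ∫ p, (ψ (f p) - ψ p.1) ∂(γ : Measure (E m × U0)) =
      (1 - α) * ∫ p, (ψ p.1 - ψ y0) ∂(γ : Measure (E m × U0)) := by
  have hψf : Integrable (fun p => ψ (f p)) (γ : Measure (E m × U0)) :=
    (ψ.compContinuous ⟨f, hf⟩).integrable _
  have hψfst : Integrable (fun p : E m × U0 => ψ p.1) (γ : Measure (E m × U0)) :=
    (ψ.compContinuous ⟨Prod.fst, continuous_fst⟩).integrable _
  have hdrift : Integrable (fun p => ψ (f p) - ψ p.1) (γ : Measure (E m × U0)) := hψf.sub hψfst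
  have hdev : Integrable (fun p : E m × U0 => ψ y0 - ψ p.1) (γ : Measure (E m × U0)) :=
    (integrable_const _).sub hψfst
  have h := hγ.2 ψ ψ.continuous.continuousOn
  rw [integral_add (hdrift.const_mul α) (hdev.const_mul _),
    integral_const_mul, integral_const_mul] at h
  have hneg : ∫ p, (ψ p.1 - ψ y0) ∂(γ : Measure (E m × U0)) =
      -∫ p, (ψ y0 - ψ p.1) ∂(γ : Measure (E m × U0)) := by
    rw [← integral_neg]; simp only [neg_sub]
  rw [hneg, mul_neg]
  linarith

theorem tendsto_integral_drift_of_mem_Wa {Y : Set (E m)} {U : E m → Set U0}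
    {f : E m × U0 → E m} {ι : Type*} {L : Filter ι} {α : ι → ℝ} {y : ι → E m}
    {γs : ι → ProbabilityMeasure (E m × U0)} (hf : Continuous f) (hα0 : ∀ i, 0 < α i)
    (hα1 : Tendsto α L (𝓝 1)) (hγs : ∀ i, γs i ∈ Wa Y U f (α i) (y i)) (ψ : E m →ᵇ ℝ) :
    Tendsto (fun i => ∫ p, (ψ (f p) - ψ p.1) ∂(γs i : Measure (E m × U0))) L (𝓝 0) := by
  have hdrift : ∀ i, ∫ p, (ψ (f p) - ψ p.1) ∂(γs i : Measure (E m × U0)) =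
      (1 - α i) / α i * ∫ p, (ψ p.1 - ψ (y i)) ∂(γs i : Measure (E m × U0)) := by
    intro i
    rw [div_mul_eq_mul_div, eq_div_iff (hα0 i).ne', mul_comm,
      integral_drift_eq_of_mem_Wa hf (hγs i)]
  have hbdd : ∀ i, ‖∫ p, (ψ p.1 - ψ (y i)) ∂(γs i : Measure (E m × U0))‖ ≤ 2 * ‖ψ‖ := by
    intro i
    simpa using norm_integral_le_of_norm_le_const (μ := (γs i : Measure (E m × U0)))
      (Eventually.of_forall fun p => (dist_eq_norm _ _).symm.trans_le (ψ.dist_le_two_norm p.1 (y i)))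
  have hcoef : Tendsto (fun i => (1 - α i) / α i) L (𝓝 0) := by
    have h := ((tendsto_const_nhds (x := (1 : ℝ))).sub hα1).div hα1 one_ne_zero
    rwa [sub_self, zero_div] at h
  simp_rw [hdrift]
  exact hcoef.zero_mul_isBoundedUnder_le ⟨2 * ‖ψ‖, eventually_map.2 (Eventually.of_forall hbdd)⟩

theorem stmt15_general {m : ℕ} {U0 : Type*} [MetricSpace U0]
    [MeasurableSpace U0] [BorelSpace U0]
    (Y : Set (E m)) (hYc : IsCompact Y)
    (U : E m → Set U0) (hUusc : UscOn Y U) (hUcomp : ∀ y ∈ Y, IsCompact (U y))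
    (f : E m × U0 → E m) (hf : Continuous f)
    (α : ℕ → ℝ) (hα : ∀ i, α i ∈ Set.Ioo (0:ℝ) 1) (hα1 : Tendsto α atTop (𝓝 1))
    (yi : ℕ → E m)
    (γi : ℕ → ProbabilityMeasure (E m × U0)) (hγi : ∀ i, γi i ∈ Wa Y U f (α i) (yi i))
    (γ : ProbabilityMeasure (E m × U0)) (hconv : Tendsto γi atTop (𝓝 γ)) :
    γ ∈ Wset Y U f := by
  have hG := isClosed_graphG hYc.isClosed hUusc (fun y hy => (hUcomp y hy).isClosed) hf
  have hγG : (γ : Measure (E m × U0)) (graphG Y U f)ᶜ = 0 :=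
    ProbabilityMeasure.measure_eq_zero_of_tendsto_of_isOpen hconv hG.isOpen_compl
      fun i => (hγi i).1
  refine ⟨hγG, fun φ hφ => ?_⟩
  obtain ⟨ψ, hψφ⟩ := hφ.exists_boundedContinuous_eqOn hYc
  have hψ : ∫ p, (ψ (f p) - ψ p.1) ∂(γ : Measure (E m × U0)) = 0 :=
    tendsto_nhds_unique
      (ProbabilityMeasure.tendsto_iff_forall_integral_tendsto.mp hconv
        ((ψ.compContinuous ⟨f, hf⟩) - ψ.compContinuous ⟨Prod.fst, continuous_fst⟩))
      (tendsto_integral_drift_of_mem_Wa hf (fun i => (hα i).1) hα1 hγi ψ)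
  rw [← hψ]
  refine integral_congr_ae ?_
  filter_upwards [mem_ae_iff.mpr hγG] with p hp
  rw [hψφ hp.2.2, hψφ hp.1]

theorem stmt15 {m : ℕ} {U0 : Type*} [MetricSpace U0] [CompactSpace U0]
    [MeasurableSpace U0] [BorelSpace U0]
    (Y : Set (E m)) (hYne : Y.Nonempty) (hYc : IsCompact Y)
    (U : E m → Set U0) (hUusc : UscOn Y U) (hUcomp : ∀ y ∈ Y, IsCompact (U y))
    (f : E m × U0 → E m) (hf : Continuous f)
    (α : ℕ → ℝ) (hα : ∀ i, α i ∈ Set.Ioo (0:ℝ) 1) (hα1 : Tendsto α atTop (𝓝 1))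
    (yi : ℕ → E m) (hyi : ∀ i, yi i ∈ Y)
    (γi : ℕ → ProbabilityMeasure (E m × U0)) (hγi : ∀ i, γi i ∈ Wa Y U f (α i) (yi i))
    (γ : ProbabilityMeasure (E m × U0)) (hconv : Tendsto γi atTop (𝓝 γ)) :
    γ ∈ Wset Y U f :=
  stmt15_general Y hYc U hUusc hUcomp f hf α hα hα1 yi γi hγi γ hconv

end LPOC
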